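/- arXiv:1405.3792 — 3 statements merged into one kernel-verified Lean document; each statement's English description precedes it below -/
import Mathlib

section
/- In the infinite-valued truth domain V, the meet operation is α-monotonic: if x1 ⊑_α y1 and x2 ⊑_α y2 then min(x1, x2) ⊑_α min(y1, y2). -/
/-- The infinite-valued truth domain: values `F β`, `0`, `T β` for ordinals `β`. -/
inductive TV where
  | F : Ordinal → TV
  | zero : TV
  | T : Ordinal → TV

namespace TV

/-- `order x`: the order of a truth value (`∞ = ⊤` for `0`). -/
def ord : TV → WithTop Ordinal
  | F β => (β : Ordinal)
  | zero => ⊤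
  | T β => (β : Ordinal)

/-- The linear order `F_0 < F_1 < ⋯ < 0 < ⋯ < T_1 < T_0` on truth values. -/
def tle : TV → TV → Prop
  | F β, F γ => β ≤ γ
  | F _, zero => True
  | F _, T _ => True
  | zero, F _ => False
  | zero, zero => True
  | zero, T _ => True
  | T β, T γ => γ ≤ β
  | T _, F _ => False
  | T _, zero => False

/-- Membership in the truth domain `V` determined by `κ`: the order is `< κ` or the value is `0`. -/
def memV (κ : Ordinal) (x : TV) : Prop :=
  x = zero ∨ ord x < (κ : WithTop Ordinal)

/-- The relation `x ⊑_α y` on truth values. -/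
def tsq (α : Ordinal) (x y : TV) : Prop :=
  (x = y ∧ ord x < (α : WithTop Ordinal)) ∨
  (x = F α ∧ (α : WithTop Ordinal) ≤ ord y) ∨
  (y = T α ∧ (α : WithTop Ordinal) ≤ ord x) ∨
  ((α : WithTop Ordinal) < ord x ∧ (α : WithTop Ordinal) < ord y)

/-- `x =_α y`. -/
def teq (α : Ordinal) (x y : TV) : Prop :=
  tsq α x y ∧ tsq α y x

open Classical in
/-- The meet (minimum) of two truth values with respect to `tle`. -/
noncomputable def tmin (x y : TV) : TV :=
  if tle x y then x else y

/-- Negation on truth values. -/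
def tneg : TV → TV
  | F β => T (β + 1)
  | zero => zero
  | T β => F (β + 1)

/-- `s` is the supremum of the set `S` of truth values with respect to `tle`. -/
def isSupTV (S : Set TV) (s : TV) : Prop :=
  (∀ x ∈ S, tle x s) ∧ ∀ b, (∀ x ∈ S, tle x b) → tle s b

end TV

/-!
The values of order at least `α` form the interval `[F_α, T_α]` of `V`, and those of order greater
than `α` its interior, so `⊑_α` is expressible through the linear order alone: `x ⊑_α y` iff
`x = y` or both lie in `[a, b] = [F_α, T_α]`, and moreover `b ≤ x → b ≤ y` and `y ≤ a → x ≤ a`.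
The last two conditions are visibly preserved by `min`. So is the first, because a value outside
`[a, b]` lies either below or above the whole interval.
-/

open Set

section ApproxLE

variable {L : Type*} [LinearOrder L] {a b x y x₁ x₂ y₁ y₂ : L}

def ApproxLE (a b x y : L) : Prop :=
  ((x ∈ Icc a b ∧ y ∈ Icc a b) ∨ x = y) ∧ (b ≤ x → b ≤ y) ∧ (y ≤ a → x ≤ a)

theorem approxLE_iff : ApproxLE a b x y ↔
    (x = y ∧ x ∉ Icc a b) ∨ (x = a ∧ y ∈ Icc a b) ∨ (y = b ∧ x ∈ Icc a b) ∨
      (x ∈ Ioo a b ∧ y ∈ Ioo a b) := by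
  simp only [ApproxLE, mem_Icc, mem_Ioo]
  grind

theorem min_mem_Icc_or_min_eq (hx : x ∈ Icc a b) (hy : y ∈ Icc a b) (z : L) :
    (min x z ∈ Icc a b ∧ min y z ∈ Icc a b) ∨ min x z = min y z := by
  rcases lt_or_ge z a with hz | hz
  · right
    rw [min_eq_right (hz.le.trans hx.1), min_eq_right (hz.le.trans hy.1)]
  · exact .inl ⟨⟨le_min hx.1 hz, min_le_of_left_le hx.2⟩,
      ⟨le_min hy.1 hz, min_le_of_left_le hy.2⟩⟩

theorem ApproxLE.min (h₁ : ApproxLE a b x₁ y₁) (h₂ : ApproxLE a b x₂ y₂) :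
    ApproxLE a b (min x₁ x₂) (min y₁ y₂) := by
  obtain ⟨hI₁, htop₁, hbot₁⟩ := h₁
  obtain ⟨hI₂, htop₂, hbot₂⟩ := h₂
  refine ⟨?_, ?_, ?_⟩
  · rcases hI₁ with ⟨hx₁, hy₁⟩ | rfl <;> rcases hI₂ with ⟨hx₂, hy₂⟩ | rfl
    · exact .inl ⟨⟨le_min hx₁.1 hx₂.1, min_le_of_left_le hx₁.2⟩,
        ⟨le_min hy₁.1 hy₂.1, min_le_of_left_le hy₁.2⟩⟩
    · exact min_mem_Icc_or_min_eq hx₁ hy₁ _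
    · simpa only [min_comm x₁] using min_mem_Icc_or_min_eq hx₂ hy₂ x₁
    · exact .inr rfl
  · simp only [le_min_iff]
    exact fun h => ⟨htop₁ h.1, htop₂ h.2⟩
  · simp only [min_le_iff]
    exact fun h => h.imp hbot₁ hbot₂

end ApproxLE

namespace TV

variable {α : Ordinal} {x y z : TV}

lemma tle_refl (x : TV) : tle x x := by
  cases x <;> simp [tle]

lemma tle_trans : tle x y → tle y z → tle x z := by
  cases x <;> cases y <;> cases z <;> simp only [tle] <;> grind

lemma tle_antisymm : tle x y → tle y x → x = y := by
  cases x <;> cases y <;> simp only [tle] <;> grind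

lemma tle_total (x y : TV) : tle x y ∨ tle y x := by
  cases x <;> cases y <;> simp only [tle] <;> grind

noncomputable instance : LinearOrder TV where
  le := tle
  le_refl := tle_refl
  le_trans _ _ _ := tle_trans
  le_antisymm _ _ := tle_antisymm
  le_total := tle_total
  toDecidableLE := Classical.decRel tle

lemma le_def : x ≤ y ↔ tle x y := Iff.rfl

lemma tmin_eq_min (x y : TV) : tmin x y = min x y := rfl

lemma coe_le_ord_iff : (α : WithTop Ordinal) ≤ ord x ↔ x ∈ Icc (F α) (T α) := by
  cases x <;> simp [ord, le_def, tle]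

lemma coe_lt_ord_iff : (α : WithTop Ordinal) < ord x ↔ x ∈ Ioo (F α) (T α) := by
  cases x <;> simp only [ord, lt_iff_le_not_ge, le_def, tle, mem_Ioo] <;> simp

lemma tsq_iff_approxLE : tsq α x y ↔ ApproxLE (F α) (T α) x y := by
  simp only [tsq, approxLE_iff, ← coe_le_ord_iff, ← coe_lt_ord_iff, not_le]

end TV

open TV in
theorem stmt_9_general {α : Ordinal} (x1 x2 y1 y2 : TV)
    (h1 : tsq α x1 y1) (h2 : tsq α x2 y2) :
    tsq α (tmin x1 x2) (tmin y1 y2) := by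
  rw [tmin_eq_min, tmin_eq_min, tsq_iff_approxLE]
  exact (tsq_iff_approxLE.mp h1).min (tsq_iff_approxLE.mp h2)

open TV in
/-- the meet of truth values is α-monotonic: if `x1 ⊑_α y1` and
`x2 ⊑_α y2` then `min x1 x2 ⊑_α min y1 y2`. -/
theorem stmt_9 {κ α : Ordinal} (hα : α < κ) (x1 x2 y1 y2 : TV)
    (hx1 : memV κ x1) (hx2 : memV κ x2) (hy1 : memV κ y1) (hy2 : memV κ y2)
    (h1 : tsq α x1 y1) (h2 : tsq α x2 y2) :
    tsq α (tmin x1 x2) (tmin y1 y2) :=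
  stmt_9_general x1 x2 y1 y2 h1 h2
end

section
/- In the infinite-valued truth domain V, the negation operation ¬ (defined by ¬F_β = T_{β+1}, ¬T_β = F_{β+1}, ¬0 = 0) is α-monotonic for every α < κ: if x ⊑_α y then ¬x ⊑_α ¬y. -/
namespace TV

theorem tsq_refl (α : Ordinal) (z : TV) : tsq α z z := by
  cases z with
  | zero => exact Or.inr <| Or.inr <| Or.inr ⟨WithTop.coe_lt_top α, WithTop.coe_lt_top α⟩
  | F β =>
    rcases lt_trichotomy β α with hlt | rfl | hgt
    · exact Or.inl ⟨rfl, WithTop.coe_lt_coe.2 hlt⟩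
    · exact Or.inr <| Or.inl ⟨rfl, le_rfl⟩
    · exact Or.inr <| Or.inr <| Or.inr ⟨WithTop.coe_lt_coe.2 hgt, WithTop.coe_lt_coe.2 hgt⟩
  | T β =>
    rcases lt_trichotomy β α with hlt | rfl | hgt
    · exact Or.inl ⟨rfl, WithTop.coe_lt_coe.2 hlt⟩
    · exact Or.inr <| Or.inr <| Or.inl ⟨rfl, le_rfl⟩
    · exact Or.inr <| Or.inr <| Or.inr ⟨WithTop.coe_lt_coe.2 hgt, WithTop.coe_lt_coe.2 hgt⟩

theorem lt_ord_tneg_of_le_ord {α : Ordinal} {w : TV} (hw : (α : WithTop Ordinal) ≤ ord w) :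
    (α : WithTop Ordinal) < ord (tneg w) := by
  cases w with
  | zero => exact WithTop.coe_lt_top α
  | F β => exact WithTop.coe_lt_coe.2 <| (WithTop.coe_le_coe.1 hw).trans_lt (lt_add_one β)
  | T β => exact WithTop.coe_lt_coe.2 <| (WithTop.coe_le_coe.1 hw).trans_lt (lt_add_one β)

theorem tsq_of_lt_ord {α : Ordinal} {x y : TV} (hx : (α : WithTop Ordinal) < ord x)
    (hy : (α : WithTop Ordinal) < ord y) : tsq α x y :=
  Or.inr <| Or.inr <| Or.inr ⟨hx, hy⟩

end TV

open TV in
theorem stmt_10_general {α : Ordinal}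
    (x y : TV) (h : tsq α x y) :
    tsq α (tneg x) (tneg y) := by
  rcases h with ⟨rfl, -⟩ | ⟨rfl, hy⟩ | ⟨rfl, hx⟩ | ⟨hx, hy⟩
  · exact tsq_refl α _
  · exact tsq_of_lt_ord (lt_ord_tneg_of_le_ord le_rfl) (lt_ord_tneg_of_le_ord hy)
  · exact tsq_of_lt_ord (lt_ord_tneg_of_le_ord hx) (lt_ord_tneg_of_le_ord le_rfl)
  · exact tsq_of_lt_ord (lt_ord_tneg_of_le_ord hx.le) (lt_ord_tneg_of_le_ord hy.le)

open TV in
/-- negation on the truth domain `V` is α-monotonic for every `α < κ`. -/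
theorem stmt_10 {κ : Ordinal} (hsucc : ∀ β < κ, β + 1 < κ) {α : Ordinal} (hα : α < κ)
    (x y : TV) (hx : memV κ x) (hy : memV κ y) (h : tsq α x y) :
    tsq α (tneg x) (tneg y) :=
  stmt_10_general x y h
end

section
/- Let L be a basic model, f : L → L a function that is α-monotonic for all α < κ. Then f has a ⊑-least pre-fixed point, which is also the ⊑-least fixed point of f. (Here x ⊑ y iff x = y or x ⊏_α y for some α, where x ⊏_α y means x ⊑_α y but not x =_α y.) -/
/-!
The least fixed point is built by transfinite approximation. At stage `α`, among the elements
agreeing (at every level `β < α`) with the earlier approximants, take the `⊔_α` of those lying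
`⊑_α`-below every `α`-pre-fixed point. By `α`-monotonicity, `f` maps this join into the same set,
so the join is `α`-pre-fixed and in fact `f`-stable up to `=_α`. Joining the restrictions
`m_β|_β` of all approximants gives an element `m` with `m =_β m_β` for every `β < κ`, which is a
fixed point by axiom (2). If `f x ⊑ x` and `x ≠ m`, let `δ` be the first level where `x` and `m`
differ: then `x` agrees with the approximants below `δ` and `f x ⊑_δ x`, so `m =_δ m_δ ⊑_δ x`,
i.e. `m ⊏_δ x`.
-/

/-- A *basic model*: a complete lattice `L` equipped with preorders `sq α` (written `⊑_α`)
for each ordinal `α < κ`, together with the relative least-upper-bound operation `lub α X`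
(written `⊔_α X`), satisfying the four basic-model axioms. -/
structure BasicModel (L : Type*) [CompleteLattice L] (κ : Ordinal) where
  sq : Ordinal → L → L → Prop
  lub : Ordinal → Set L → L
  sq_refl : ∀ {α : Ordinal}, α < κ → ∀ x, sq α x x
  sq_trans : ∀ {α : Ordinal}, α < κ → ∀ {x y z : L}, sq α x y → sq α y z → sq α x z
  ax1 : ∀ {α β : Ordinal}, α < β → β < κ → ∀ {x y : L}, sq β x y → sq α x y ∧ sq α y x
  ax2 : ∀ {x y : L}, (∀ α, α < κ → sq α x y ∧ sq α y x) → x = y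
  ax3_ub : ∀ {α : Ordinal}, α < κ → ∀ (x : L) (X : Set L),
      X ⊆ {y | ∀ β < α, sq β x y ∧ sq β y x} → ∀ z ∈ X, sq α z (lub α X)
  ax3_least : ∀ {α : Ordinal}, α < κ → ∀ (x : L) (X : Set L),
      X ⊆ {y | ∀ β < α, sq β x y ∧ sq β y x} →
      ∀ z : L, (∀ β < α, sq β x z ∧ sq β z x) → (∀ w ∈ X, sq α w z) →
        sq α (lub α X) z ∧ lub α X ≤ z
  ax4 : ∀ {α : Ordinal}, α < κ → ∀ (S : Set (L × L)), (∀ p ∈ S, sq α p.1 p.2) →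
      sq α (sSup (Prod.fst '' S)) (sSup (Prod.snd '' S))

namespace BasicModel

variable {L : Type*} [CompleteLattice L] {κ : Ordinal}

/-- `x =_α y`. -/
def eqAt (B : BasicModel L κ) (α : Ordinal) (x y : L) : Prop :=
  B.sq α x y ∧ B.sq α y x

/-- The set `(x]_α = {y | ∀ β < α, x =_β y}`. -/
def cone (B : BasicModel L κ) (α : Ordinal) (x : L) : Set L :=
  {y | ∀ β < α, B.eqAt β x y}

/-- The α-restriction `x|_α = ⊔_α {x}`. -/
def restrict (B : BasicModel L κ) (α : Ordinal) (x : L) : L :=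
  B.lub α {x}

/-- `x ⊏_α y`: `x ⊑_α y` but not `x =_α y`. -/
def ltAt (B : BasicModel L κ) (α : Ordinal) (x y : L) : Prop :=
  B.sq α x y ∧ ¬ B.eqAt α x y

/-- The global relation `⊑`: `x ⊑ y` iff `x = y` or `x ⊏_α y` for some `α < κ`. -/
def sqle (B : BasicModel L κ) (x y : L) : Prop :=
  x = y ∨ ∃ α < κ, B.ltAt α x y

/-- `g : A → B` is α-monotonic. -/
def MonotonicAt {A B : Type*} [CompleteLattice A] [CompleteLattice B]
    (BA : BasicModel A κ) (BB : BasicModel B κ) (α : Ordinal) (g : A → B) : Prop :=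
  ∀ x y : A, BA.sq α x y → BB.sq α (g x) (g y)

end BasicModel

namespace BasicModel

variable {L : Type*} [CompleteLattice L] {κ : Ordinal} (B : BasicModel L κ)
  {α β γ δ : Ordinal} {x y z : L}

section Relations

lemma eqAt_refl (hα : α < κ) (x : L) : B.eqAt α x x :=
  ⟨B.sq_refl hα x, B.sq_refl hα x⟩

lemma eqAt_symm (h : B.eqAt α x y) : B.eqAt α y x :=
  ⟨h.2, h.1⟩

lemma eqAt_trans (hα : α < κ) (h₁ : B.eqAt α x y) (h₂ : B.eqAt α y z) : B.eqAt α x z :=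
  ⟨B.sq_trans hα h₁.1 h₂.1, B.sq_trans hα h₂.2 h₁.2⟩

lemma eqAt_of_lt_of_sq (hβα : β < α) (hα : α < κ) (h : B.sq α x y) : B.eqAt β x y :=
  B.ax1 hβα hα h

lemma sq_of_le (hβα : β ≤ α) (hα : α < κ) (h : B.sq α x y) : B.sq β x y := by
  rcases hβα.lt_or_eq with hlt | rfl
  · exact (B.eqAt_of_lt_of_sq hlt hα h).1
  · exact h

lemma eqAt_of_le (hβα : β ≤ α) (hα : α < κ) (h : B.eqAt α x y) : B.eqAt β x y :=
  ⟨B.sq_of_le hβα hα h.1, B.sq_of_le hβα hα h.2⟩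

lemma eqAt_map {f : L → L} (hf : B.MonotonicAt B α f) (h : B.eqAt α x y) :
    B.eqAt α (f x) (f y) :=
  ⟨hf x y h.1, hf y x h.2⟩

lemma self_mem_cone (hα : α ≤ κ) (x : L) : x ∈ B.cone α x :=
  fun _ hβ => B.eqAt_refl (hβ.trans_le hα) x

lemma mem_cone_of_eqAt (hα : α < κ) (h : B.eqAt α x y) : y ∈ B.cone α x :=
  fun _ hβ => B.eqAt_of_le hβ.le hα h

lemma sq_of_sqle_of_mem_cone (hδ : δ < κ) (h : B.sqle y x) (hy : y ∈ B.cone δ x) :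
    B.sq δ y x := by
  rcases h with rfl | ⟨γ, hγ, hsq, hne⟩
  · exact B.sq_refl hδ y
  rcases lt_trichotomy γ δ with hlt | rfl | hgt
  · exact (hne (B.eqAt_symm (hy γ hlt))).elim
  · exact hsq
  · exact (B.eqAt_of_lt_of_sq hgt hγ hsq).1

lemma exists_mem_cone_not_eqAt (hxy : x ≠ y) :
    ∃ δ < κ, ¬ B.eqAt δ x y ∧ y ∈ B.cone δ x := by
  have hex : ∃ δ, δ < κ ∧ ¬ B.eqAt δ x y := by
    by_contra! h
    exact hxy (B.ax2 h)
  obtain ⟨δ, ⟨hδ, hne⟩, hmin⟩ := wellFounded_lt.has_min {δ | δ < κ ∧ ¬ B.eqAt δ x y} hex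
  refine ⟨δ, hδ, hne, fun β hβ => ?_⟩
  by_contra hb
  exact hmin β ⟨hβ.trans hδ, hb⟩ hβ

end Relations

section Joins

lemma sq_lub {X : Set L} (hα : α < κ) (hX : X ⊆ B.cone α x) (hz : z ∈ X) :
    B.sq α z (B.lub α X) :=
  B.ax3_ub hα x X hX z hz

lemma lub_sq {X : Set L} (hα : α < κ) (hX : X ⊆ B.cone α x) (hz : z ∈ B.cone α x)
    (h : ∀ w ∈ X, B.sq α w z) : B.sq α (B.lub α X) z :=
  (B.ax3_least hα x X hX z hz h).1

lemma lub_le {X : Set L} (hα : α < κ) (hX : X ⊆ B.cone α x) (hz : z ∈ B.cone α x)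
    (h : ∀ w ∈ X, B.sq α w z) : B.lub α X ≤ z :=
  (B.ax3_least hα x X hX z hz h).2

lemma lub_mem_cone {X : Set L} (hα : α < κ) (hX : X ⊆ B.cone α x) (hne : X.Nonempty) :
    B.lub α X ∈ B.cone α x := by
  obtain ⟨z, hz⟩ := hne
  exact fun β hβ => B.eqAt_trans (hβ.trans hα) (hX hz β hβ)
    (B.eqAt_of_lt_of_sq hβ hα (B.sq_lub hα hX hz))

lemma bot_sq (hα : α < κ) (z : L) : B.sq α ⊥ z := by
  have hbot : B.lub α ∅ = ⊥ :=
    le_bot_iff.mp (B.lub_le hα (Set.empty_subset _) (B.self_mem_cone hα.le ⊥) (by simp))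
  rw [← hbot]
  exact B.lub_sq hα (Set.empty_subset _) (B.self_mem_cone hα.le z) (by simp)

lemma restrict_eqAt (hα : α < κ) (x : L) : B.eqAt α x (B.restrict α x) := by
  have hsub : {x} ⊆ B.cone α x := Set.singleton_subset_iff.2 (B.self_mem_cone hα.le x)
  exact ⟨B.sq_lub hα hsub rfl,
    B.lub_sq hα hsub (B.self_mem_cone hα.le x) (by simpa using B.sq_refl hα x)⟩

lemma restrict_le (hα : α < κ) (hz : z ∈ B.cone α x) (h : B.sq α x z) :
    B.restrict α x ≤ z :=
  B.lub_le hα (Set.singleton_subset_iff.2 (B.self_mem_cone hα.le x)) hz (by simpa using h)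

lemma sq_iSup_iSup {ι : Sort*} (hα : α < κ) {u v : ι → L} (h : ∀ i, B.sq α (u i) (v i)) :
    B.sq α (⨆ i, u i) (⨆ i, v i) := by
  have := B.ax4 hα (Set.range fun i => (u i, v i)) (by rintro _ ⟨i, rfl⟩; exact h i)
  simpa only [← Set.range_comp, Function.comp_def, sSup_range] using this

lemma sSup_eqAt {S : Set L} (hα : α < κ) (hS : S.Nonempty) (h : ∀ z ∈ S, B.eqAt α z x) :
    B.eqAt α (sSup S) x := by
  have := hS.to_subtype
  rw [sSup_eq_iSup']
  constructor
  · simpa only [iSup_const] using B.sq_iSup_iSup hα fun z : S => (h z z.2).1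
  · simpa only [iSup_const] using B.sq_iSup_iSup hα fun z : S => (h z z.2).2

lemma sSup_sq {S : Set L} (hα : α < κ) (h : ∀ z ∈ S, B.sq α z x) : B.sq α (sSup S) x := by
  rcases S.eq_empty_or_nonempty with rfl | hS
  · simpa using B.bot_sq hα x
  have := hS.to_subtype
  rw [sSup_eq_iSup']
  simpa only [iSup_const] using B.sq_iSup_iSup hα fun z : S => h z z.2

end Joins

section Approximants

def AgreesBelow (s : Ordinal → L) (α : Ordinal) (x : L) : Prop :=
  ∀ β < α, B.eqAt β (s β) x

variable {s : Ordinal → L} {f : L → L}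

lemma agreesBelow_iff_mem_cone (hα : α ≤ κ) (hx : B.AgreesBelow s α x) :
    B.AgreesBelow s α y ↔ y ∈ B.cone α x := by
  constructor
  · exact fun hy β hβ => B.eqAt_trans (hβ.trans_le hα) (B.eqAt_symm (hx β hβ)) (hy β hβ)
  · exact fun hy β hβ => B.eqAt_trans (hβ.trans_le hα) (hx β hβ) (hy β hβ)

def limit (s : Ordinal → L) (α : Ordinal) : L :=
  ⨆ β, ⨆ (_ : β < α), B.restrict β (s β)

lemma agreesBelow_limit (hα : α ≤ κ) (hs : ∀ γ < α, B.AgreesBelow s γ (s γ)) :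
    B.AgreesBelow s α (B.limit s α) := by
  intro β hβ
  have hβκ := hβ.trans_le hα
  -- Replacing the terms with index `γ ≥ β` by `s β` leaves the join `=_β`-unchanged
  -- and turns it into `s β`.
  let u : Ordinal → L := fun γ => if β ≤ γ then s β else B.restrict γ (s γ)
  have hu : ⨆ γ, ⨆ (_ : γ < α), u γ = s β := by
    refine le_antisymm (iSup₂_le fun γ hγ => ?_) (le_iSup₂_of_le β hβ (by simp [u]))
    by_cases hβγ : β ≤ γ
    · simp [u, hβγ]
    simp only [u, hβγ, if_false]
    have hγβ := not_le.mp hβγ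
    have hγβ' := hs β hβ γ hγβ
    exact B.restrict_le (hγβ.trans hβκ) (B.mem_cone_of_eqAt (hγβ.trans hβκ) hγβ') hγβ'.1
  have hpoint : ∀ γ < α, B.eqAt β (u γ) (B.restrict γ (s γ)) := by
    intro γ hγ
    by_cases hβγ : β ≤ γ
    · simp only [u, hβγ, if_true]
      have hγκ := hγ.trans_le hα
      have hsβγ : B.eqAt β (s β) (s γ) := by
        rcases hβγ.lt_or_eq with hlt | rfl
        · exact hs γ hγ β hlt
        · exact B.eqAt_refl hβκ _
      exact B.eqAt_trans hβκ hsβγ (B.eqAt_of_le hβγ hγκ (B.restrict_eqAt hγκ _))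
    · simp only [u, hβγ, if_false]
      exact B.eqAt_refl hβκ _
  rw [← hu]
  exact ⟨B.sq_iSup_iSup hβκ fun γ => B.sq_iSup_iSup hβκ fun hγ => (hpoint γ hγ).1,
    B.sq_iSup_iSup hβκ fun γ => B.sq_iSup_iSup hβκ fun hγ => (hpoint γ hγ).2⟩

def candidates (s : Ordinal → L) (f : L → L) (α : Ordinal) : Set L :=
  {z | B.AgreesBelow s α z ∧ ∀ x, B.AgreesBelow s α x → B.sq α (f x) x → B.sq α z x}

lemma candidates_subset_cone (hα : α ≤ κ) {c : L} (hc : B.AgreesBelow s α c) :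
    B.candidates s f α ⊆ B.cone α c :=
  fun _ hz => (B.agreesBelow_iff_mem_cone hα hc).1 hz.1

lemma candidates_nonempty (hα : α < κ) {c : L} (hc : B.AgreesBelow s α c) :
    (B.candidates s f α).Nonempty := by
  by_cases hpre : ∃ x, B.AgreesBelow s α x ∧ B.sq α (f x) x
  · obtain ⟨x₀, hx₀, hfx₀⟩ := hpre
    let E : Set L := {z | ∀ x, B.AgreesBelow s α x → B.sq α (f x) x → B.sq α z x}
    refine ⟨sSup E, fun β hβ => ?_, fun x hx hfx => B.sSup_sq hα fun z hz => hz x hx hfx⟩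
    have hE : ∀ z ∈ E, B.eqAt β z (s β) := fun z hz =>
      B.eqAt_trans (hβ.trans hα) (B.eqAt_of_lt_of_sq hβ hα (hz x₀ hx₀ hfx₀))
        (B.eqAt_symm (hx₀ β hβ))
    exact B.eqAt_symm (B.sSup_eqAt (hβ.trans hα) ⟨⊥, fun x _ _ => B.bot_sq hα x⟩ hE)
  · push Not at hpre
    exact ⟨c, hc, fun x hx hfx => (hpre x hx hfx).elim⟩

lemma agreesBelow_lub_candidates (hα : α < κ) {c : L} (hc : B.AgreesBelow s α c) :
    B.AgreesBelow s α (B.lub α (B.candidates s f α)) :=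
  (B.agreesBelow_iff_mem_cone hα.le hc).2 <|
    B.lub_mem_cone hα (B.candidates_subset_cone hα.le hc) (B.candidates_nonempty hα hc)

lemma lub_candidates_sq (hα : α < κ) {c : L} (hc : B.AgreesBelow s α c)
    (hx : B.AgreesBelow s α x) (hfx : B.sq α (f x) x) :
    B.sq α (B.lub α (B.candidates s f α)) x :=
  B.lub_sq hα (B.candidates_subset_cone hα.le hc) ((B.agreesBelow_iff_mem_cone hα.le hc).1 hx)
    fun _ hw => hw.2 x hx hfx

lemma agreesBelow_map (hα : α ≤ κ) (hf : ∀ β < κ, B.MonotonicAt B β f)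
    (hfs : ∀ γ < α, B.eqAt γ (f (s γ)) (s γ)) (hx : B.AgreesBelow s α x) :
    B.AgreesBelow s α (f x) := fun β hβ =>
  B.eqAt_trans (hβ.trans_le hα) (B.eqAt_symm (hfs β hβ))
    (B.eqAt_map (hf β (hβ.trans_le hα)) (hx β hβ))

lemma map_lub_candidates_eqAt (hα : α < κ) (hf : ∀ β < κ, B.MonotonicAt B β f)
    (hfs : ∀ γ < α, B.eqAt γ (f (s γ)) (s γ)) {c : L} (hc : B.AgreesBelow s α c) :
    B.eqAt α (f (B.lub α (B.candidates s f α))) (B.lub α (B.candidates s f α)) := by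
  set m := B.lub α (B.candidates s f α)
  have hm := B.agreesBelow_lub_candidates (f := f) hα hc
  have hfm := B.agreesBelow_map hα.le hf hfs hm
  have hfm_mem : f m ∈ B.candidates s f α := ⟨hfm, fun x hx hfx =>
    B.sq_trans hα (hf α hα _ _ (B.lub_candidates_sq hα hc hx hfx)) hfx⟩
  have hfm_sq : B.sq α (f m) m := B.sq_lub hα (B.candidates_subset_cone hα.le hc) hfm_mem
  exact ⟨hfm_sq, B.lub_candidates_sq hα hc hfm (hf α hα _ _ hfm_sq)⟩

-- The set is `B.candidates (approx f) f α`, unfolded so that the recursive calls are at `β < α`.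
noncomputable def approx (f : L → L) (α : Ordinal) : L :=
  B.lub α {z | (∀ β (_ : β < α), B.eqAt β (approx f β) z) ∧
    ∀ x, (∀ β (_ : β < α), B.eqAt β (approx f β) x) → B.sq α (f x) x → B.sq α z x}
termination_by α

lemma approx_eq (f : L → L) (α : Ordinal) : B.approx f α = B.lub α (B.candidates (B.approx f) f α) := by
  rw [approx]; rfl

lemma approx_spec (hf : ∀ β < κ, B.MonotonicAt B β f) (hα : α < κ) :
    B.AgreesBelow (B.approx f) α (B.approx f α) ∧
      B.eqAt α (f (B.approx f α)) (B.approx f α) := by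
  induction α using WellFoundedLT.induction with
  | ind α ih =>
    have hc := B.agreesBelow_limit hα.le fun γ hγ => (ih γ hγ (hγ.trans hα)).1
    rw [approx_eq]
    exact ⟨B.agreesBelow_lub_candidates hα hc,
      B.map_lub_candidates_eqAt hα hf (fun γ hγ => (ih γ hγ (hγ.trans hα)).2) hc⟩

lemma approx_sq (hf : ∀ β < κ, B.MonotonicAt B β f) (hα : α < κ)
    (hx : B.AgreesBelow (B.approx f) α x) (hfx : B.sq α (f x) x) : B.sq α (B.approx f α) x := by
  have hc := (B.approx_spec hf hα).1
  rw [approx_eq] at hc ⊢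
  exact B.lub_candidates_sq hα hc hx hfx

end Approximants

section LeastFixedPoint

noncomputable def lfp (f : L → L) : L :=
  B.limit (B.approx f) κ

variable {f : L → L}

lemma agreesBelow_lfp (hf : ∀ β < κ, B.MonotonicAt B β f) :
    B.AgreesBelow (B.approx f) κ (B.lfp f) :=
  B.agreesBelow_limit le_rfl fun _ hγ => (B.approx_spec hf hγ).1

lemma map_lfp (hf : ∀ β < κ, B.MonotonicAt B β f) : f (B.lfp f) = B.lfp f := by
  refine B.ax2 fun α hα => ?_
  have hm := B.agreesBelow_lfp hf α hα
  exact B.eqAt_trans hα (B.eqAt_trans hα (B.eqAt_map (hf α hα) (B.eqAt_symm hm))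
    (B.approx_spec hf hα).2) hm

lemma lfp_sqle (hf : ∀ β < κ, B.MonotonicAt B β f) (hx : B.sqle (f x) x) :
    B.sqle (B.lfp f) x := by
  by_cases hmx : B.lfp f = x
  · exact Or.inl hmx
  obtain ⟨δ, hδ, hne, hcone⟩ := B.exists_mem_cone_not_eqAt hmx
  have hm : B.AgreesBelow (B.approx f) δ (B.lfp f) :=
    fun β hβ => B.agreesBelow_lfp hf β (hβ.trans hδ)
  have hxδ : B.AgreesBelow (B.approx f) δ x := (B.agreesBelow_iff_mem_cone hδ.le hm).2 hcone
  have hfxδ : f x ∈ B.cone δ x := (B.agreesBelow_iff_mem_cone hδ.le hxδ).1 <|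
    B.agreesBelow_map hδ.le hf (fun γ hγ => (B.approx_spec hf (hγ.trans hδ)).2) hxδ
  have hsq := B.approx_sq hf hδ hxδ (B.sq_of_sqle_of_mem_cone hδ hx hfxδ)
  exact Or.inr ⟨δ, hδ, B.sq_trans hδ (B.agreesBelow_lfp hf δ hδ).2 hsq, hne⟩

end LeastFixedPoint

end BasicModel

open BasicModel in
/-- a function on a basic model which is α-monotonic for all `α < κ` has a
`⊑`-least pre-fixed point, which is also its `⊑`-least fixed point. -/
theorem stmt_12 {L : Type*} [CompleteLattice L] {κ : Ordinal} (B : BasicModel L κ)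
    (f : L → L) (hf : ∀ α < κ, ∀ x y : L, B.sq α x y → B.sq α (f x) (f y)) :
    ∃ m : L, B.sqle (f m) m ∧ (∀ x : L, B.sqle (f x) x → B.sqle m x) ∧
      f m = m ∧ ∀ x : L, f x = x → B.sqle m x :=
  ⟨B.lfp f, Or.inl (B.map_lfp hf), fun _ => B.lfp_sqle hf, B.map_lfp hf,
    fun _ hx => B.lfp_sqle hf (Or.inl hx)⟩
end
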